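/- Let β be a totally real algebraic number with T(β) = 0 and T(β³) = 0, and set r = T((β² - T(β²))²). Then the difference between the largest and smallest conjugate of β is at least 2·√(2√r). -/

import Mathlib

/-- `x : ℝ` is a totally real algebraic number: it is algebraic over `ℚ` and all
complex roots of its minimal polynomial are real. -/
def IsTotallyReal (x : ℝ) : Prop :=
  IsAlgebraic ℚ x ∧ ∀ z : ℂ, Polynomial.aeval z (minpoly ℚ x) = 0 → z.im = 0

/-- The normalized trace of a real algebraic number: the sum of the real roots of its
minimal polynomial divided by its degree. -/
noncomputable def normTrace (x : ℝ) : ℝ :=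
  ((minpoly ℚ x).aroots ℝ).sum / (minpoly ℚ x).natDegree

/-!
For totally real `β` and `f ∈ ℚ[X]`, the normalized trace of `f(β)` is the mean of `f` over the
conjugates of `β`: the trace of `f(β)` on `ℚ(β)` is the sum of its images under the embeddings
into `ℂ`, and these embeddings send `β` to the roots of its minimal polynomial, all real.
So the conjugates `t` have mean `0` and mean cube `0`, and `r` is the variance of `t²`.
If `a ≤ 0 ≤ b` are the extreme conjugates, then
`(t² + ab/2)² - (a + b) t³ = (ab/2)² - t² (t - a) (b - t) ≤ (ab/2)²`;
averaging removes the cubic term, and the variance of `t²` is at most its mean squared distance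
to `-ab/2`, so `r ≤ (ab/2)²`. Hence `2√r ≤ -ab ≤ ((b - a)/2)²`.
-/

open Polynomial IntermediateField Module

namespace IntermediateField.AdjoinSimple

theorem coe_aeval_gen {K L : Type*} [Field K] [Field L] [Algebra K L] (x : L) (f : K[X]) :
    ((aeval (gen K x) f : K⟮x⟯) : L) = aeval x f :=
  (aeval_algebraMap_apply L (gen K x) f).symm

theorem trace_aeval_gen_eq_sum_aroots {K L E : Type*} [Field K] [CharZero K] [Field L]
    [Algebra K L] [Field E] [Algebra K E] [IsAlgClosed E] {x : L} (hx : IsIntegral K x)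
    (f : K[X]) :
    algebraMap K E (Algebra.trace K K⟮x⟯ (aeval (gen K x) f)) =
      (((minpoly K x).aroots E).map fun z => aeval z f).sum := by
  classical
  have := adjoin.finiteDimensional hx
  have hnodup : ((minpoly K x).aroots E).Nodup :=
    nodup_roots ((separable_map _).mpr (minpoly.irreducible hx).separable)
  rw [trace_eq_sum_embeddings]
  calc ∑ σ : K⟮x⟯ →ₐ[K] E, σ (aeval (gen K x) f)
      = ∑ y : {y // y ∈ (minpoly K x).aroots E}, aeval (y : E) f :=
        (Fintype.sum_equiv (algHomAdjoinIntegralEquiv K hx).symm _ _ fun y => by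
          rw [← aeval_algHom_apply, algHomAdjoinIntegralEquiv_symm_apply_gen]).symm
    _ = ∑ y ∈ ((minpoly K x).aroots E).toFinset, aeval y f :=
        Finset.sum_mem_multiset _ _ _ fun _ => rfl
    _ = (((minpoly K x).aroots E).map fun z => aeval z f).sum := by
        rw [Finset.sum_eq_multiset_sum, Multiset.toFinset_val, hnodup.dedup]

end IntermediateField.AdjoinSimple

namespace IsTotallyReal

variable {x : ℝ}

theorem isIntegral (h : IsTotallyReal x) : IsIntegral ℚ x := h.1.isIntegral

theorem splits (h : IsTotallyReal x) : ((minpoly ℚ x).map (algebraMap ℚ ℝ)).Splits := by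
  refine (IsAlgClosed.splits _).of_splits_map (algebraMap ℝ ℂ) fun z hz => ⟨z.re, ?_⟩
  rw [Polynomial.map_map, ← IsScalarTower.algebraMap_eq, mem_roots', IsRoot.def,
    eval_map_algebraMap] at hz
  exact Complex.ext rfl (h.2 z hz.2).symm

theorem card_aroots (h : IsTotallyReal x) :
    ((minpoly ℚ x).aroots ℝ).card = (minpoly ℚ x).natDegree := by
  rw [aroots_def, ← h.splits.natDegree_eq_card_roots, natDegree_map]

theorem aroots_complex_eq_map (h : IsTotallyReal x) :
    (minpoly ℚ x).aroots ℂ = ((minpoly ℚ x).aroots ℝ).map (algebraMap ℝ ℂ) := by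
  rw [aroots_def, IsScalarTower.algebraMap_eq ℚ ℝ ℂ, ← Polynomial.map_map, h.splits.roots_map,
    aroots_def]

theorem normTrace_eq_neg_nextCoeff (h : IsTotallyReal x) :
    normTrace x = algebraMap ℚ ℝ (-(minpoly ℚ x).nextCoeff / (minpoly ℚ x).natDegree) := by
  rw [normTrace, ← neg_neg ((minpoly ℚ x).aroots ℝ).sum, aroots_def,
    ← h.splits.nextCoeff_eq_neg_sum_roots_of_monic ((minpoly.monic h.isIntegral).map _),
    nextCoeff_map_eq]
  simp

theorem im_algHom_aeval_gen (h : IsTotallyReal x) (σ : ℚ⟮x⟯ →ₐ[ℚ] ℂ) (f : ℚ[X]) :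
    (σ (aeval (AdjoinSimple.gen ℚ x) f)).im = 0 := by
  have hσ : σ (AdjoinSimple.gen ℚ x) ∈ (minpoly ℚ x).aroots ℂ := by
    refine mem_aroots.mpr ⟨minpoly.ne_zero h.isIntegral, ?_⟩
    rw [← minpoly_gen ℚ x]
    exact minpoly.aeval_algHom _ σ (AdjoinSimple.gen ℚ x)
  rw [h.aroots_complex_eq_map, Multiset.mem_map] at hσ
  obtain ⟨t, -, ht⟩ := hσ
  rw [← aeval_algHom_apply, ← ht, aeval_algebraMap_apply, Complex.coe_algebraMap,
    Complex.ofReal_im]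

end IsTotallyReal

theorem isTotallyReal_aeval {x : ℝ} (h : IsTotallyReal x) (f : ℚ[X]) :
    IsTotallyReal (aeval x f) := by
  have := adjoin.finiteDimensional h.isIntegral
  rw [← AdjoinSimple.coe_aeval_gen]
  refine ⟨isAlgebraic_iff.mp (Algebra.IsAlgebraic.isAlgebraic _), fun z hz => ?_⟩
  rw [← minpoly_eq] at hz
  obtain ⟨σ, rfl⟩ := exists_algHom_of_splits_of_aeval
    (fun s => ⟨Algebra.IsIntegral.isIntegral s, IsAlgClosed.splits _⟩) hz
  exact h.im_algHom_aeval_gen σ f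

theorem normTrace_coe_eq_trace_div_finrank {F : IntermediateField ℚ ℝ} [FiniteDimensional ℚ F]
    {y : F} (hy : IsTotallyReal y) :
    normTrace y = algebraMap ℚ ℝ (Algebra.trace ℚ F y / finrank ℚ F) := by
  have hmin : minpoly ℚ (y : ℝ) = minpoly ℚ y :=
    minpoly.algebraMap_eq (algebraMap F ℝ).injective y
  have hk : finrank ℚ⟮y⟯ F ≠ 0 := finrank_pos.ne'
  rw [hy.normTrace_eq_neg_nextCoeff, hmin, trace_eq_finrank_mul_minpoly_nextCoeff,
    ← finrank_mul_finrank ℚ ℚ⟮y⟯ F, adjoin.finrank (Algebra.IsIntegral.isIntegral y)]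
  push_cast
  field_simp

theorem IsTotallyReal.normTrace_aeval {x : ℝ} (h : IsTotallyReal x) (f : ℚ[X]) :
    normTrace (aeval x f) =
      (((minpoly ℚ x).aroots ℝ).map fun t => aeval t f).sum /
        ((minpoly ℚ x).aroots ℝ).card := by
  have := adjoin.finiteDimensional h.isIntegral
  rw [← AdjoinSimple.coe_aeval_gen,
    normTrace_coe_eq_trace_div_finrank (AdjoinSimple.coe_aeval_gen x f ▸ isTotallyReal_aeval h f),
    adjoin.finrank h.isIntegral, ← h.card_aroots, map_div₀, map_natCast]
  congr 1
  apply Complex.ofReal_injective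
  rw [← Complex.coe_algebraMap, ← IsScalarTower.algebraMap_apply]
  refine (AdjoinSimple.trace_aeval_gen_eq_sum_aroots h.isIntegral f).trans ?_
  rw [h.aroots_complex_eq_map, Multiset.map_map, map_multiset_sum, Multiset.map_map]
  congr 1
  exact Multiset.map_congr rfl fun t _ => aeval_algebraMap_apply ℂ t f

theorem sq_add_sub_mul_cube_le {a b t : ℝ} (ha : a ≤ t) (hb : t ≤ b) :
    (t ^ 2 + a * b / 2) ^ 2 - (a + b) * t ^ 3 ≤ (a * b / 2) ^ 2 := by
  have key : (t ^ 2 + a * b / 2) ^ 2 - (a + b) * t ^ 3 =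
      (a * b / 2) ^ 2 - t ^ 2 * (t - a) * (b - t) := by ring
  rw [key, sub_le_self_iff]
  exact mul_nonneg (mul_nonneg (sq_nonneg t) (sub_nonneg.2 ha)) (sub_nonneg.2 hb)

namespace Multiset

theorem sum_map_sub_sq (s : Multiset ℝ) (c : ℝ) :
    (s.map fun u => (u - c) ^ 2).sum = (s.map (· ^ 2)).sum - 2 * c * s.sum + card s * c ^ 2 := by
  induction s using Multiset.induction_on with
  | empty => simp
  | cons u s ih =>
    simp only [map_cons, sum_cons, card_cons, ih]
    push_cast
    ring

theorem sum_map_sub_mean_sq_le (s : Multiset ℝ) (c : ℝ) :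
    (s.map fun u => (u - s.sum / (card s : ℝ)) ^ 2).sum ≤ (s.map fun u => (u - c) ^ 2).sum := by
  rcases eq_or_ne s 0 with rfl | hs
  · simp
  have hn : (0 : ℝ) < card s := by exact_mod_cast card_pos.mpr hs
  set m := s.sum / (card s : ℝ)
  have hsum : s.sum = card s * m := (mul_div_cancel₀ _ hn.ne').symm
  rw [sum_map_sub_sq, sum_map_sub_sq, hsum]
  nlinarith [mul_nonneg hn.le (sq_nonneg (m - c))]

theorem sum_map_sq_sub_mean_sq_le_of_sum_cubes_eq_zero {s : Multiset ℝ}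
    (h3 : (s.map (· ^ 3)).sum = 0) {a b : ℝ} (hs : ∀ t ∈ s, a ≤ t ∧ t ≤ b) :
    (s.map fun t => (t ^ 2 - (s.map (· ^ 2)).sum / (card s : ℝ)) ^ 2).sum ≤
      (card s : ℝ) * (a * b / 2) ^ 2 :=
  calc (s.map fun t => (t ^ 2 - (s.map (· ^ 2)).sum / (card s : ℝ)) ^ 2).sum
      ≤ ((s.map (· ^ 2)).map fun u => (u - -(a * b / 2)) ^ 2).sum := by
        simpa only [map_map, card_map, Function.comp_def] using
          sum_map_sub_mean_sq_le (s.map (· ^ 2)) (-(a * b / 2))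
    _ = (s.map fun t => (t ^ 2 + a * b / 2) ^ 2 - (a + b) * t ^ 3).sum := by
        rw [map_map, sum_map_sub, sum_map_mul_left, h3, mul_zero, sub_zero]
        simp only [Function.comp_def, sub_neg_eq_add]
    _ ≤ (card s : ℝ) * (a * b / 2) ^ 2 := by
        have := sum_le_card_nsmul _ _ fun u hu => by
          obtain ⟨t, ht, rfl⟩ := mem_map.mp hu
          exact sq_add_sub_mul_cube_le (hs t ht).1 (hs t ht).2
        rwa [card_map, nsmul_eq_mul] at this

theorem exists_two_sqrt_two_sqrt_le_sub {s : Multiset ℝ} (hs : s ≠ 0) (h1 : s.sum = 0)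
    (h3 : (s.map (· ^ 3)).sum = 0) {m r : ℝ} (hm : m = (s.map (· ^ 2)).sum / (card s : ℝ))
    (hr : r = (s.map fun t => (t ^ 2 - m) ^ 2).sum / (card s : ℝ)) :
    ∃ a ∈ s, ∃ b ∈ s, 2 * √(2 * √r) ≤ b - a := by
  obtain ⟨a, ha, hmin⟩ : ∃ a ∈ s, ∀ t ∈ s, a ≤ t := s.exists_min_image id hs
  obtain ⟨b, hb, hmax⟩ : ∃ b ∈ s, ∀ t ∈ s, t ≤ b := s.exists_max_image id hs
  have hn : (0 : ℝ) < card s := by exact_mod_cast card_pos.mpr hs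
  have ha0 : a ≤ 0 := by
    have := card_nsmul_le_sum (s := s) hmin
    rw [h1, nsmul_eq_mul] at this
    nlinarith
  have hb0 : 0 ≤ b := by
    have := sum_le_card_nsmul s b hmax
    rw [h1, nsmul_eq_mul] at this
    nlinarith
  have hvar : r ≤ (a * b / 2) ^ 2 := by
    rw [hr, hm, div_le_iff₀ hn, mul_comm]
    exact sum_map_sq_sub_mean_sq_le_of_sum_cubes_eq_zero h3 fun t ht => ⟨hmin t ht, hmax t ht⟩
  have hsqrt : √r ≤ -(a * b) / 2 :=
    Real.sqrt_le_iff.mpr ⟨by nlinarith, by nlinarith⟩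
  have hsqrt2 : √(2 * √r) ≤ (b - a) / 2 :=
    Real.sqrt_le_iff.mpr ⟨by linarith, by nlinarith [sq_nonneg (a + b)]⟩
  exact ⟨a, ha, b, hb, by linarith⟩

end Multiset

theorem stmt_11 (β : ℝ) (h : IsTotallyReal β) (hT : normTrace β = 0)
    (hT3 : normTrace (β ^ 3) = 0)
    (r : ℝ) (hr : r = normTrace ((β ^ 2 - normTrace (β ^ 2)) ^ 2)) :
    ∃ x y : ℝ, Polynomial.aeval x (minpoly ℚ β) = 0 ∧ Polynomial.aeval y (minpoly ℚ β) = 0 ∧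
      2 * Real.sqrt (2 * Real.sqrt r) ≤ x - y := by
  have hmean (f : ℚ[X]) := h.normTrace_aeval f
  set R := (minpoly ℚ β).aroots ℝ
  have hR : R ≠ 0 := Multiset.card_pos.mp (h.card_aroots ▸ minpoly.natDegree_pos h.isIntegral)
  -- `q` lets us write `(β ^ 2 - normTrace (β ^ 2)) ^ 2` as `aeval β ((X ^ 2 - C q) ^ 2)`
  obtain ⟨q, hq⟩ : ∃ q : ℚ, normTrace (β ^ 2) = algebraMap ℚ ℝ q := by
    have := (isTotallyReal_aeval h (X ^ 2)).normTrace_eq_neg_nextCoeff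
    rw [map_pow, aeval_X] at this
    exact ⟨_, this⟩
  have h1 := hmean X
  have h3 := hmean (X ^ 3)
  have hm := hmean (X ^ 2)
  have hr' := hmean ((X ^ 2 - C q) ^ 2)
  simp only [map_pow, map_sub, aeval_X, aeval_C, ← hq, Multiset.map_id'] at h1 h3 hm hr'
  rw [hT, eq_comm, div_eq_zero_iff, Nat.cast_eq_zero, Multiset.card_eq_zero] at h1
  rw [hT3, eq_comm, div_eq_zero_iff, Nat.cast_eq_zero, Multiset.card_eq_zero] at h3
  obtain ⟨a, ha, b, hb, hab⟩ := Multiset.exists_two_sqrt_two_sqrt_le_sub hR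
    (h1.resolve_right hR) (h3.resolve_right hR) hm (hr.trans hr')
  exact ⟨b, a, (mem_aroots.mp hb).2, (mem_aroots.mp ha).2, hab⟩
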